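/- Let K be a closed convex cone, H an affine subspace with H ∩ K ≠ ∅, and F the minimal cone of H ∩ K (the smallest face of K containing H ∩ K). Then H ∩ ri(F) ≠ ∅, where ri denotes relative interior. Moreover, H ∩ ri(K) = ∅ if and only if H^⊥ ∩ (K* \ K^⊥) ≠ ∅, where H^⊥ is the set of vectors orthogonal to the direction space of H and vanishing (with appropriate normalization) on H. -/

import Mathlib

open scoped RealInnerProductSpace

variable {Y : Type*} [NormedAddCommGroup Y] [InnerProductSpace ℝ Y] [FiniteDimensional ℝ Y]

/-- The dual cone of a set `S`: all vectors having nonnegative inner product with every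
element of `S`. -/
def dualSet (S : Set Y) : Set Y := {y | ∀ x ∈ S, 0 ≤ ⟪x, y⟫}

/-- The orthogonal complement (as a set) of the span of `S`. -/
def perpSet (S : Set Y) : Set Y := {y | ∀ x ∈ S, ⟪x, y⟫ = 0}

/-- `K ∩ y₁^⊥ ∩ … ∩ y_{i-1}^⊥`. -/
def frCut {k : ℕ} (K : Set Y) (y : Fin k → Y) (i : Fin k) : Set Y :=
  K ∩ {x | ∀ j : Fin k, j < i → ⟪y j, x⟫ = 0}

/-- Membership in the order-`k` facial reduction cone `FR_k(K)`:
`y₁ ∈ K*` and `y_i ∈ (K ∩ y₁^⊥ ∩ … ∩ y_{i-1}^⊥)*` for each `i`. -/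
def IsFRSeq {k : ℕ} (K : Set Y) (y : Fin k → Y) : Prop :=
  ∀ i : Fin k, y i ∈ dualSet (frCut K y i)


/-- `F` is a face of the cone `K`. -/
def IsFace (K F : Set Y) : Prop :=
  F ⊆ K ∧ Convex ℝ F ∧
    ∀ y z : Y, y ∈ K → z ∈ K → (2⁻¹ : ℝ) • (y + z) ∈ F → y ∈ F ∧ z ∈ F


/-! Let `x` be a relative interior point of `H ∩ K`. The minimal face is then
`{z ∈ K | x - ε • z ∈ K for some ε > 0}`, the directions along which one can move backwards
from `x` without leaving `K`, and `x` lies in its relative interior.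
For the alternative: if `H` misses `ri K`, a point `x₀ ∈ H ∩ K` is a relative boundary point
of the convex cone `K + H.direction`; a supporting hyperplane there vanishes on `H`, is
nonnegative on `K` and is not identically zero on `K`. -/

open Set
open scoped Pointwise

section Cone

variable {E : Type*} [AddCommGroup E] [Module ℝ E] {K : Set E} {a b x : E}

theorem Convex.add_mem_of_smul_mem (hKconv : Convex ℝ K)
    (hKcone : ∀ c : ℝ, 0 ≤ c → ∀ x ∈ K, c • x ∈ K) (ha : a ∈ K) (hb : b ∈ K) : a + b ∈ K := by
  have hmid := hKconv ha hb (by norm_num : (0 : ℝ) ≤ 2⁻¹) (by norm_num : (0 : ℝ) ≤ 2⁻¹)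
    (by norm_num)
  convert hKcone 2 (by norm_num) _ hmid using 1
  module

theorem Convex.sub_smul_mem_of_le (hK : Convex ℝ K) (hx : x ∈ K) {z : E} {ε ε' : ℝ}
    (hmem : x - ε • z ∈ K) (hε' : 0 < ε') (hle : ε' ≤ ε) : x - ε' • z ∈ K := by
  have hε : 0 < ε := hε'.trans_le hle
  have := hK.add_smul_mem hx (y := -(ε • z)) (by rwa [← sub_eq_add_neg])
    (t := ε' / ε) ⟨by positivity, (div_le_one hε).2 hle⟩
  rwa [smul_neg, smul_smul, div_mul_cancel₀ _ hε.ne', ← sub_eq_add_neg] at this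

/-- The smallest face of the convex cone `K` containing `x ∈ K`. -/
def faceOf (K : Set E) (x : E) : Set E := {z | z ∈ K ∧ ∃ ε : ℝ, 0 < ε ∧ x - ε • z ∈ K}

theorem self_mem_faceOf (hK0 : (0 : E) ∈ K) (hx : x ∈ K) : x ∈ faceOf K x :=
  ⟨hx, 1, one_pos, by rwa [one_smul, sub_self]⟩

theorem Convex.faceOf (hK : Convex ℝ K) (hx : x ∈ K) : Convex ℝ (faceOf K x) := by
  rintro z₁ ⟨hz₁, ε₁, hε₁, h₁⟩ z₂ ⟨hz₂, ε₂, hε₂, h₂⟩ a b ha hb hab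
  set ε := min ε₁ ε₂
  have hε : 0 < ε := lt_min hε₁ hε₂
  refine ⟨hK hz₁ hz₂ ha hb hab, ε, hε, ?_⟩
  have hsplit : a • (x - ε • z₁) + b • (x - ε • z₂) = (a + b) • x - ε • (a • z₁ + b • z₂) := by
    module
  rw [hab, one_smul] at hsplit
  rw [← hsplit]
  exact hK (hK.sub_smul_mem_of_le hx h₁ hε (min_le_left _ _))
    (hK.sub_smul_mem_of_le hx h₂ hε (min_le_right _ _)) ha hb hab

end Cone

section IntrinsicInterior

variable {E : Type*} [NormedAddCommGroup E] [NormedSpace ℝ E] {K s : Set E} {x z r : E}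

theorem AffineSubspace.add_smul_sub_mem (Q : AffineSubspace ℝ E) (hx : x ∈ Q) (hz : z ∈ Q)
    (c : ℝ) : x + c • (z - x) ∈ Q := by
  simpa [vsub_eq_sub, vadd_eq_add, add_comm] using Q.smul_vsub_vadd_mem c hz hx hx

theorem mem_intrinsicInterior_iff_exists_isOpen :
    x ∈ intrinsicInterior ℝ s ↔ x ∈ affineSpan ℝ s ∧
      ∃ U : Set E, IsOpen U ∧ x ∈ U ∧ U ∩ affineSpan ℝ s ⊆ s := by
  constructor
  · rintro ⟨y, hy, rfl⟩
    rw [mem_interior_iff_mem_nhds, mem_nhds_subtype] at hy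
    obtain ⟨t, ht, hts⟩ := hy
    obtain ⟨U, hUt, hUo, hxU⟩ := mem_nhds_iff.1 ht
    exact ⟨y.2, U, hUo, hxU, fun w ⟨hwU, hwA⟩ => hts (show (⟨w, hwA⟩ : affineSpan ℝ s) ∈ _
      from hUt hwU)⟩
  · rintro ⟨hxA, U, hUo, hxU, hUs⟩
    refine ⟨⟨x, hxA⟩, ?_, rfl⟩
    rw [mem_interior_iff_mem_nhds, mem_nhds_subtype]
    exact ⟨U, hUo.mem_nhds hxU, fun w hw => hUs ⟨hw, w.2⟩⟩

theorem mem_intrinsicInterior_iff_of_affineSpan_eq {V : Submodule ℝ E}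
    (hV : (affineSpan ℝ s : Set E) = V) :
    x ∈ intrinsicInterior ℝ s ↔ ∃ hx : x ∈ V, (⟨x, hx⟩ : V) ∈ interior ((↑) ⁻¹' s : Set V) := by
  let e := Homeomorph.setCongr hV
  have he : interior ((↑) ⁻¹' s : Set (affineSpan ℝ s)) = e ⁻¹' interior ((↑) ⁻¹' s : Set V) :=
    (e.preimage_interior (Subtype.val ⁻¹' s : Set V)).symm
  simp only [intrinsicInterior, he]
  constructor
  · rintro ⟨y, hy, rfl⟩
    exact ⟨_, hy⟩
  · rintro ⟨hx, hxV⟩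
    exact ⟨⟨x, (hV.symm ▸ hx : x ∈ (affineSpan ℝ s : Set E))⟩, hxV, rfl⟩

theorem exists_add_smul_sub_mem_of_mem_intrinsicInterior (hx : x ∈ intrinsicInterior ℝ s)
    (hz : z ∈ s) : ∃ ε : ℝ, 0 < ε ∧ x + ε • (x - z) ∈ s := by
  obtain ⟨hxA, U, hUo, hxU, hUs⟩ := mem_intrinsicInterior_iff_exists_isOpen.1 hx
  have hline : Continuous fun t : ℝ => x + t • (x - z) := by fun_prop
  have hev : ∀ᶠ t in nhdsWithin (0 : ℝ) (Ioi 0), x + t • (x - z) ∈ U :=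
    nhdsWithin_le_nhds (hline.continuousAt.preimage_mem_nhds (hUo.mem_nhds (by simpa using hxU)))
  obtain ⟨ε, hεU, hε⟩ := (hev.and self_mem_nhdsWithin).exists
  refine ⟨ε, hε, hUs ⟨hεU, ?_⟩⟩
  rw [show x + ε • (x - z) = x + (-ε) • (z - x) by module]
  exact (affineSpan ℝ s).add_smul_sub_mem hxA (subset_affineSpan ℝ s hz) _

theorem Convex.combo_self_intrinsicInterior_mem_intrinsicInterior (hs : Convex ℝ s) (hz : z ∈ s)
    (hr : r ∈ intrinsicInterior ℝ s) {a b : ℝ} (ha : 0 ≤ a) (hb : 0 < b) (hab : a + b = 1) :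
    a • z + b • r ∈ intrinsicInterior ℝ s := by
  obtain rfl : a = 1 - b := by linarith
  obtain ⟨hrA, U, hUo, hrU, hUs⟩ := mem_intrinsicInterior_iff_exists_isOpen.1 hr
  have hzA : z ∈ affineSpan ℝ s := subset_affineSpan ℝ s hz
  -- `g` is the inverse of the homothety with centre `z` and ratio `b`
  let g : E → E := fun w => z + b⁻¹ • (w - z)
  have hg_inv : ∀ w, (1 - b) • z + b • g w = w := fun w => by
    simp only [g, smul_add, smul_smul, mul_inv_cancel₀ hb.ne', one_smul]; module
  refine mem_intrinsicInterior_iff_exists_isOpen.2 ⟨?_, g ⁻¹' U, ?_, ?_, ?_⟩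
  · rw [show (1 - b) • z + b • r = z + b • (r - z) by module]
    exact (affineSpan ℝ s).add_smul_sub_mem hzA hrA b
  · exact hUo.preimage (by fun_prop)
  · have hgr : g ((1 - b) • z + b • r) = r := by
      simp only [g, show (1 - b) • z + b • r - z = b • (r - z) by module, smul_smul,
        inv_mul_cancel₀ hb.ne', one_smul, add_sub_cancel]
    rwa [mem_preimage, hgr]
  · rintro w ⟨hwU, hwA⟩
    rw [← hg_inv w]
    exact hs hz (hUs ⟨hwU, (affineSpan ℝ s).add_smul_sub_mem hzA hwA _⟩) ha hb.le (by ring)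

theorem subset_faceOf_of_mem_intrinsicInterior (hKcone : ∀ c : ℝ, 0 ≤ c → ∀ x ∈ K, c • x ∈ K)
    {C : Set E} (hCK : C ⊆ K) (hx : x ∈ intrinsicInterior ℝ C) : C ⊆ faceOf K x := by
  intro z hz
  obtain ⟨ε, hε, hmem⟩ := exists_add_smul_sub_mem_of_mem_intrinsicInterior hx hz
  refine ⟨hCK hz, ε / (1 + ε), by positivity, ?_⟩
  have hx_eq : x - (ε / (1 + ε)) • z = (1 / (1 + ε)) • (x + ε • (x - z)) := by
    match_scalars <;> field_simp
  rw [hx_eq]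
  exact hKcone _ (by positivity) _ (hCK hmem)

end IntrinsicInterior

section FiniteDimensional

variable {E : Type*} [NormedAddCommGroup E] [NormedSpace ℝ E] [FiniteDimensional ℝ E]
  {K s : Set E} {x : E}

theorem Convex.mem_intrinsicInterior_of_forall_exists_add_smul_sub_mem (hs : Convex ℝ s)
    (hx : x ∈ s) (hext : ∀ z ∈ s, ∃ ε : ℝ, 0 < ε ∧ x + ε • (x - z) ∈ s) :
    x ∈ intrinsicInterior ℝ s := by
  obtain ⟨r, hr⟩ := Set.Nonempty.intrinsicInterior hs ⟨x, hx⟩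
  obtain ⟨ε, hε, hz⟩ := hext r (intrinsicInterior_subset hr)
  have hx_eq : x = (1 / (1 + ε)) • (x + ε • (x - r)) + (ε / (1 + ε)) • r := by
    match_scalars
    · field_simp
    · field_simp
      ring
  rw [hx_eq]
  exact hs.combo_self_intrinsicInterior_mem_intrinsicInterior hz hr (by positivity)
    (by positivity) (by field_simp)

theorem mem_intrinsicInterior_faceOf (hKconv : Convex ℝ K)
    (hKcone : ∀ c : ℝ, 0 ≤ c → ∀ x ∈ K, c • x ∈ K) (hK0 : (0 : E) ∈ K) (hx : x ∈ K) :
    x ∈ intrinsicInterior ℝ (faceOf K x) := by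
  refine (hKconv.faceOf hx).mem_intrinsicInterior_of_forall_exists_add_smul_sub_mem
    (self_mem_faceOf hK0 hx) ?_
  rintro z ⟨hz, ε, hε, hmem⟩
  refine ⟨ε, hε, ?_, 1 / (2 * (1 + ε)), by positivity, ?_⟩
  · rw [show x + ε • (x - z) = ε • x + (x - ε • z) by module]
    exact hKconv.add_mem_of_smul_mem hKcone (hKcone ε hε.le x hx) hmem
  · have hx_eq : x - (1 / (2 * (1 + ε))) • (x + ε • (x - z))
        = (2⁻¹ : ℝ) • x + (ε / (2 * (1 + ε))) • z := by
      match_scalars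
      · field_simp
        ring
      · field_simp
    rw [hx_eq]
    exact hKconv.add_mem_of_smul_mem hKcone (hKcone _ (by norm_num) _ hx)
      (hKcone _ (by positivity) _ hz)

end FiniteDimensional

section InnerProductSpace

variable {E : Type*} [NormedAddCommGroup E] [InnerProductSpace ℝ E] {K F : Set E} {x : E}

theorem IsFace.smul_mem_of_le_two (hF : IsFace K F) (hKcone : ∀ c : ℝ, 0 ≤ c → ∀ x ∈ K, c • x ∈ K)
    {u : E} (hu : u ∈ F) {c : ℝ} (hc : 0 ≤ c) (hc2 : c ≤ 2) : c • u ∈ F := by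
  have huK := hF.1 hu
  have hmid : (2⁻¹ : ℝ) • (c • u + (2 - c) • u) = u := by module
  exact (hF.2.2 _ _ (hKcone c hc u huK) (hKcone (2 - c) (by linarith) u huK)
    (by rw [hmid]; exact hu)).1

theorem IsFace.two_pow_smul_mem (hF : IsFace K F) (hKcone : ∀ c : ℝ, 0 ≤ c → ∀ x ∈ K, c • x ∈ K)
    {u : E} (hu : u ∈ F) (n : ℕ) : (2 : ℝ) ^ n • u ∈ F := by
  induction n with
  | zero => simpa using hu
  | succ n ih =>
    rw [pow_succ', mul_smul]
    exact hF.smul_mem_of_le_two hKcone ih zero_le_two le_rfl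

theorem IsFace.smul_mem (hF : IsFace K F) (hKcone : ∀ c : ℝ, 0 ≤ c → ∀ x ∈ K, c • x ∈ K)
    {u : E} (hu : u ∈ F) {c : ℝ} (hc : 0 ≤ c) : c • u ∈ F := by
  obtain ⟨n, hn⟩ := pow_unbounded_of_one_lt c one_lt_two
  have hpos : (0 : ℝ) < 2 ^ n := by positivity
  have hc_eq : c • u = (c / 2 ^ n) • ((2 : ℝ) ^ n • u) := by
    rw [smul_smul, div_mul_cancel₀ _ hpos.ne']
  rw [hc_eq]
  exact hF.smul_mem_of_le_two hKcone (hF.two_pow_smul_mem hKcone hu n) (by positivity)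
    (by rw [div_le_iff₀ hpos]; linarith)

theorem isFace_faceOf (hKconv : Convex ℝ K) (hKcone : ∀ c : ℝ, 0 ≤ c → ∀ x ∈ K, c • x ∈ K)
    (hx : x ∈ K) : IsFace K (faceOf K x) := by
  refine ⟨fun z hz => hz.1, hKconv.faceOf hx, ?_⟩
  rintro y z hy hz ⟨-, ε, hε, hmem⟩
  have hε2 : 0 < ε / 2 := by positivity
  have hy' : x - (ε / 2) • y = (x - ε • (2⁻¹ : ℝ) • (y + z)) + (ε / 2) • z := by module
  have hz' : x - (ε / 2) • z = (x - ε • (2⁻¹ : ℝ) • (y + z)) + (ε / 2) • y := by module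
  exact ⟨⟨hy, ε / 2, hε2, hy' ▸ hKconv.add_mem_of_smul_mem hKcone hmem (hKcone _ hε2.le z hz)⟩,
    ⟨hz, ε / 2, hε2, hz' ▸ hKconv.add_mem_of_smul_mem hKcone hmem (hKcone _ hε2.le y hy)⟩⟩

theorem IsFace.faceOf_subset (hF : IsFace K F) (hKcone : ∀ c : ℝ, 0 ≤ c → ∀ x ∈ K, c • x ∈ K)
    (hx : x ∈ F) : faceOf K x ⊆ F := by
  rintro z ⟨hz, ε, hε, hmem⟩
  have hmid : (2⁻¹ : ℝ) • ((2 : ℝ) • (x - ε • z) + (2 * ε) • z) = x := by module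
  have h2εz := (hF.2.2 _ _ (hKcone 2 zero_le_two _ hmem) (hKcone _ (by positivity) _ hz)
    (hmid ▸ hx)).2
  have := hF.smul_mem hKcone h2εz (c := (2 * ε)⁻¹) (by positivity)
  rwa [smul_smul, inv_mul_cancel₀ (by positivity), one_smul] at this

theorem mem_perpSet_of_mem_intrinsicInterior {y p : E} (hy : y ∈ dualSet K)
    (hp : p ∈ intrinsicInterior ℝ K) (hpy : ⟪y, p⟫ = 0) : y ∈ perpSet K := by
  intro z hz
  obtain ⟨ε, hε, hmem⟩ := exists_add_smul_sub_mem_of_mem_intrinsicInterior hp hz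
  have h_ext : ⟪p + ε • (p - z), y⟫ = -(ε * ⟪z, y⟫) := by
    rw [inner_add_left, real_inner_smul_left, inner_sub_left, real_inner_comm, hpy]
    ring
  have := hy _ hmem
  rw [h_ext] at this
  exact le_antisymm (nonpos_of_mul_nonpos_right (by linarith) hε) (hy z hz)

end InnerProductSpace

theorem Convex.exists_inner_support_of_notMem_intrinsicInterior {s : Set Y} {x : Y}
    (hs : Convex ℝ s) (h0 : (0 : Y) ∈ s) (hx : x ∈ s) (hxri : x ∉ intrinsicInterior ℝ s) :
    ∃ y : Y, (∀ c ∈ s, ⟪y, x⟫ ≤ ⟪y, c⟫) ∧ ∃ c ∈ s, ⟪y, x⟫ < ⟪y, c⟫ := by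
  set V := Submodule.span ℝ s
  have hV : (affineSpan ℝ s : Set Y) = V := by
    simpa [Set.insert_eq_of_mem h0] using affineSpan_insert_zero (k := ℝ) s
  set C : Set V := Subtype.val ⁻¹' s
  have hsV : ∀ {c}, c ∈ s → c ∈ V := fun hc => Submodule.subset_span hc
  have hxC : (⟨x, hsV hx⟩ : V) ∉ interior C := fun h =>
    hxri ((mem_intrinsicInterior_iff_of_affineSpan_eq hV).2 ⟨_, h⟩)
  obtain ⟨r, hr⟩ := Set.Nonempty.intrinsicInterior hs ⟨x, hx⟩
  obtain ⟨hrV, hrC⟩ := (mem_intrinsicInterior_iff_of_affineSpan_eq hV).1 hr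
  obtain ⟨f, hf0, hfx⟩ := geometric_hahn_banach_of_nonempty_interior_point
    (hs.linear_preimage V.subtype) hxC ⟨_, hrC⟩
  have hfr : f ⟨r, hrV⟩ < f ⟨x, hsV hx⟩ := by
    have : f '' interior C ⊆ Iio (f ⟨x, hsV hx⟩) := by
      rw [← interior_Iic]
      exact interior_maximal (image_subset_iff.2 fun c hc => hfx c (interior_subset hc))
        (f.isOpenMap_of_ne_zero hf0 _ isOpen_interior)
    exact this ⟨_, hrC, rfl⟩
  set y : V := (InnerProductSpace.toDual ℝ V).symm f
  have hfy : ∀ v : V, f v = ⟪(y : Y), v⟫ := fun v => by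
    rw [← InnerProductSpace.toDual_symm_apply, Submodule.coe_inner]
  refine ⟨-(y : Y), fun c hc => ?_, r, intrinsicInterior_subset hr, ?_⟩
  · have := hfx ⟨c, hsV hc⟩ hc
    simp only [hfy, inner_neg_left] at this ⊢
    linarith
  · simp only [hfy, inner_neg_left] at hfr ⊢
    linarith

section Alternative

variable {K : Set Y} {x : Y}

theorem notMem_intrinsicInterior_add_direction (hKconv : Convex ℝ K) {H : AffineSubspace ℝ Y}
    (hxH : x ∈ H) (hxK : x ∈ K) (hempty : (H : Set Y) ∩ intrinsicInterior ℝ K = ∅) :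
    x ∉ intrinsicInterior ℝ (K + (H.direction : Set Y)) := by
  intro hx
  obtain ⟨r, hr⟩ := Set.Nonempty.intrinsicInterior hKconv ⟨x, hxK⟩
  obtain ⟨ε, hε, k, hk, w, hw, hkw⟩ := exists_add_smul_sub_mem_of_mem_intrinsicInterior hx
    (Set.add_mem_add (intrinsicInterior_subset hr) H.direction.zero_mem)
  -- moving from `x` by `-w / (1 + ε)` along `H` reaches `(k + ε • r) / (1 + ε) ∈ ri K`
  set h := (-(1 / (1 + ε))) • w + x
  have hhH : h ∈ H := AffineSubspace.vadd_mem_of_mem_direction (H.direction.smul_mem _ hw) hxH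
  have hh : h = (1 / (1 + ε)) • k + (ε / (1 + ε)) • r := by
    simp only [add_zero] at hkw
    rw [show k = x + ε • (x - r) - w by rw [← hkw]; abel]
    match_scalars
    · field_simp
    · field_simp
    · ring
  refine (Set.eq_empty_iff_forall_notMem.1 hempty) h ⟨hhH, ?_⟩
  rw [hh]
  exact hKconv.combo_self_intrinsicInterior_mem_intrinsicInterior hk hr (by positivity)
    (by positivity) (by field_simp)

theorem exists_mem_dualSet_of_inter_intrinsicInterior_eq_empty (hKconv : Convex ℝ K)
    (hKcone : ∀ c : ℝ, 0 ≤ c → ∀ x ∈ K, c • x ∈ K) (hK0 : (0 : Y) ∈ K)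
    {H : AffineSubspace ℝ Y} (hHK : ((H : Set Y) ∩ K).Nonempty)
    (hempty : (H : Set Y) ∩ intrinsicInterior ℝ K = ∅) :
    ∃ y ∈ dualSet K, y ∉ perpSet K ∧ ∀ h ∈ (H : Set Y), ⟪y, h⟫ = 0 := by
  obtain ⟨x, hxH, hxK⟩ := hHK
  set Q := K + (H.direction : Set Y)
  have hKQ : ∀ {k}, k ∈ K → k ∈ Q := fun hk => by
    simpa using Set.add_mem_add hk H.direction.zero_mem
  have hdirQ : ∀ {w}, w ∈ H.direction → w ∈ Q := fun hw => by
    simpa using Set.add_mem_add hK0 hw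
  obtain ⟨y, hy_min, c, hcQ, hc⟩ :=
    (hKconv.add H.direction.convex).exists_inner_support_of_notMem_intrinsicInterior (hKQ hK0)
      (hKQ hxK) (notMem_intrinsicInterior_add_direction hKconv hxH hxK hempty)
  -- the minimum of `⟪y, ·⟫` over `Q` is attained both at `x` and, as `Q` is a cone, at `0`
  have hyx : ⟪y, x⟫ = 0 := by
    have h0 := hy_min 0 (hKQ hK0)
    have h2 := hy_min _ (hKQ (hKcone 2 zero_le_two x hxK))
    rw [inner_zero_right] at h0
    rw [real_inner_smul_right] at h2
    linarith
  have hyQ : ∀ q ∈ Q, 0 ≤ ⟪y, q⟫ := fun q hq => hyx ▸ hy_min q hq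
  have hy_dir : ∀ w ∈ H.direction, ⟪y, w⟫ = 0 := fun w hw => by
    have := hyQ _ (hdirQ (H.direction.neg_mem hw))
    rw [inner_neg_right] at this
    exact le_antisymm (by linarith) (hyQ w (hdirQ hw))
  refine ⟨y, fun k hk => ?_, fun hperp => ?_, fun h hh => ?_⟩
  · rw [real_inner_comm]
    exact hyQ k (hKQ hk)
  · obtain ⟨k, hk, w, hw, rfl⟩ := hcQ
    rw [hyx, inner_add_right, hy_dir w hw, real_inner_comm, hperp k hk, add_zero] at hc
    exact lt_irrefl _ hc
  · have := hy_dir _ (AffineSubspace.vsub_mem_direction hh hxH)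
    rwa [vsub_eq_sub, inner_sub_right, hyx, sub_zero] at this

end Alternative

theorem stmt_18_general (K : Set Y) (hKconv : Convex ℝ K)
    (hKcone : ∀ c : ℝ, 0 ≤ c → ∀ x ∈ K, c • x ∈ K) (hK0 : (0 : Y) ∈ K)
    (H : AffineSubspace ℝ Y) (hHK : ((H : Set Y) ∩ K).Nonempty)
    (F : Set Y) (hFface : IsFace K F) (hFsup : (H : Set Y) ∩ K ⊆ F)
    (hFmin : ∀ G : Set Y, IsFace K G → (H : Set Y) ∩ K ⊆ G → F ⊆ G) :
    ((H : Set Y) ∩ intrinsicInterior ℝ F).Nonempty ∧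
    ((H : Set Y) ∩ intrinsicInterior ℝ K = ∅ ↔
      ∃ y ∈ dualSet K, y ∉ perpSet K ∧ ∀ h ∈ (H : Set Y), ⟪y, h⟫ = 0) := by
  obtain ⟨x, hx⟩ := hHK.intrinsicInterior (H.convex.inter hKconv)
  have hxHK : x ∈ (H : Set Y) ∩ K := intrinsicInterior_subset hx
  have hF : F = faceOf K x :=
    (hFmin _ (isFace_faceOf hKconv hKcone hxHK.2)
      (subset_faceOf_of_mem_intrinsicInterior hKcone inter_subset_right hx)).antisymm
      (hFface.faceOf_subset hKcone (hFsup hxHK))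
  refine ⟨⟨x, hxHK.1, hF ▸ mem_intrinsicInterior_faceOf hKconv hKcone hK0 hxHK.2⟩,
    exists_mem_dualSet_of_inter_intrinsicInterior_eq_empty hKconv hKcone hK0 hHK, ?_⟩
  rintro ⟨y, hy, hyK, hyH⟩
  refine Set.eq_empty_iff_forall_notMem.2 fun p ⟨hpH, hp⟩ => hyK ?_
  exact mem_perpSet_of_mem_intrinsicInterior hy hp (hyH p hpH)

/-- Let `H` be an affine subspace meeting `K`, and `F` the minimal cone of `H ∩ K`.
Then `H` meets the relative interior of `F`; moreover `H ∩ ri K = ∅` iff there is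
`y ∈ K* \ K^⊥` vanishing on `H`. -/
theorem stmt_18 (K : Set Y) (hKcl : IsClosed K) (hKconv : Convex ℝ K)
    (hKcone : ∀ c : ℝ, 0 ≤ c → ∀ x ∈ K, c • x ∈ K) (hK0 : (0 : Y) ∈ K)
    (H : AffineSubspace ℝ Y) (hHK : ((H : Set Y) ∩ K).Nonempty)
    (F : Set Y) (hFface : IsFace K F) (hFsup : (H : Set Y) ∩ K ⊆ F)
    (hFmin : ∀ G : Set Y, IsFace K G → (H : Set Y) ∩ K ⊆ G → F ⊆ G) :
    ((H : Set Y) ∩ intrinsicInterior ℝ F).Nonempty ∧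
    ((H : Set Y) ∩ intrinsicInterior ℝ K = ∅ ↔
      ∃ y ∈ dualSet K, y ∉ perpSet K ∧ ∀ h ∈ (H : Set Y), ⟪y, h⟫ = 0) :=
  stmt_18_general K hKconv hKcone hK0 H hHK F hFface hFsup hFmin
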